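/- Let h ∈ L¹(ℝ, ℂ) and let φ : ℝ → ℂ be bounded and continuous. Define the convolution Lφ(t) = ∫_ℝ h(t−s) φ(s) ds. Then Lφ is bounded and continuous with sup_{t∈ℝ} |Lφ(t)| ≤ (sup_{t∈ℝ} |φ(t)|) · ‖h‖_{L¹}; moreover, if φ is almost automorphic then Lφ is almost automorphic. -/

import Mathlib

/-!
Convolving against an integrable kernel is dominated by `‖L‖ ‖f‖ · sup ‖φ‖`, so by dominated
convergence it commutes with pointwise limits of uniformly bounded functions. Since it also
commutes with translations, the subsequence `(τₙ)` and the limit `ψ̃` witnessing almost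
automorphy of `φ` witness it for `f ⋆ φ`, with limit `f ⋆ ψ̃`; here `ψ̃`, a pointwise limit of
translates of `φ`, is measurable and bounded by any bound of `φ`.
-/

open MeasureTheory Filter Topology

/-- A continuous function `ψ : ℝ → V` into a Banach space is almost automorphic if for every
sequence of reals there is a subsequence `(τₙ)` and a function `ψ̃` with
`ψ(t+τₙ) → ψ̃(t)` and `ψ̃(t−τₙ) → ψ(t)` pointwise on `ℝ`. -/
def AlmostAutomorphic {V : Type*} [NormedAddCommGroup V] (ψ : ℝ → V) : Prop :=
  Continuous ψ ∧ ∀ σ : ℕ → ℝ, ∃ k : ℕ → ℕ, StrictMono k ∧ ∃ ψt : ℝ → V,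
    (∀ t : ℝ, Tendsto (fun n => ψ (t + σ (k n))) atTop (𝓝 (ψt t))) ∧
    (∀ t : ℝ, Tendsto (fun n => ψt (t - σ (k n))) atTop (𝓝 (ψ t)))

open ContinuousLinearMap
open scoped Convolution

section Convolution

variable {𝕜 E E' F : Type*} [NontriviallyNormedField 𝕜]
  [NormedAddCommGroup E] [NormedSpace 𝕜 E] [NormedAddCommGroup E'] [NormedSpace 𝕜 E']
  [NormedAddCommGroup F] [NormedSpace ℝ F] [NormedSpace 𝕜 F] (L : E →L[𝕜] E' →L[𝕜] F)

section Group

variable {G : Type*} [MeasurableSpace G] {μ : Measure G} {f : G → E}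

theorem norm_convolution_le_of_norm_le [Sub G] {g : G → E'} {C : ℝ} (hf : Integrable f μ)
    (hg : ∀ y, ‖g y‖ ≤ C) (x : G) :
    ‖(f ⋆[L, μ] g) x‖ ≤ ‖L‖ * C * ∫ t, ‖f t‖ ∂μ := by
  calc ‖(f ⋆[L, μ] g) x‖ ≤ ∫ t, ‖L‖ * ‖f t‖ * C ∂μ :=
        norm_integral_le_of_norm_le ((hf.norm.const_mul _).mul_const _)
          (Eventually.of_forall fun t => L.le_of_opNorm₂_le_of_le le_rfl le_rfl (hg _))
    _ = ‖L‖ * C * ∫ t, ‖f t‖ ∂μ := by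
        rw [← integral_const_mul]
        congr 1 with t
        ring

theorem tendsto_convolution_of_tendsto [AddGroup G] [MeasurableSub G] {ι : Type*} {l : Filter ι}
    [l.IsCountablyGenerated] {g : ι → G → E'} {g₀ : G → E'} {C : ℝ} (hf : Integrable f μ)
    (hg_meas : ∀ n, StronglyMeasurable (g n)) (hg_bound : ∀ n y, ‖g n y‖ ≤ C)
    (hg_lim : ∀ y, Tendsto (fun n => g n y) l (𝓝 (g₀ y))) (x : G) :
    Tendsto (fun n => (f ⋆[L, μ] g n) x) l (𝓝 ((f ⋆[L, μ] g₀) x)) :=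
  tendsto_integral_filter_of_dominated_convergence (fun t => ‖L‖ * ‖f t‖ * C)
    (Eventually.of_forall fun n => L.aestronglyMeasurable_comp₂ hf.aestronglyMeasurable
      ((hg_meas n).comp_measurable (measurable_id.const_sub x)).aestronglyMeasurable)
    (Eventually.of_forall fun n => Eventually.of_forall fun _ =>
      L.le_of_opNorm₂_le_of_le le_rfl le_rfl (hg_bound n _))
    ((hf.norm.const_mul _).mul_const _)
    (Eventually.of_forall fun t => ((L (f t)).continuous.tendsto _).comp (hg_lim (x - t)))

theorem convolution_apply_add [AddCommGroup G] (g : G → E') (x c : G) :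
    (f ⋆[L, μ] g) (x + c) = (f ⋆[L, μ] fun y => g (y + c)) x := by
  simp only [convolution_def, sub_add_eq_add_sub]

theorem integral_mul_comp_sub_eq_convolution [NormedSpace ℝ 𝕜] [AddCommGroup G]
    [MeasurableAdd G] [MeasurableNeg G] [μ.IsAddLeftInvariant] [μ.IsNegInvariant]
    (f g : G → 𝕜) (x : G) :
    ∫ s, f (x - s) * g s ∂μ = (f ⋆[lsmul 𝕜 𝕜, μ] g) x := by
  rw [convolution_lsmul, ← integral_sub_left_eq_self _ μ x]
  simp only [sub_sub_cancel, smul_eq_mul]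

end Group

theorem AlmostAutomorphic.convolution {f : ℝ → E} {φ : ℝ → E'}
    (hφ : AlmostAutomorphic φ) {C : ℝ} (hφC : ∀ t, ‖φ t‖ ≤ C) (hf : Integrable f) :
    AlmostAutomorphic (f ⋆[L] φ) := by
  refine ⟨BddAbove.continuous_convolution_right_of_integrable L
    ⟨C, Set.forall_mem_range.2 hφC⟩ hf hφ.1, fun σ => ?_⟩
  obtain ⟨k, hk, ψ, hφψ, hψφ⟩ := hφ.2 σ
  have hψ_meas : StronglyMeasurable ψ :=
    stronglyMeasurable_of_tendsto atTop
      (fun n => (hφ.1.comp (continuous_add_const (σ (k n)))).stronglyMeasurable)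
      (tendsto_pi_nhds.2 hφψ)
  have hψC : ∀ t, ‖ψ t‖ ≤ C := fun t => le_of_tendsto' (hφψ t).norm fun n => hφC _
  refine ⟨k, hk, f ⋆[L] ψ, fun t => ?_, fun t => ?_⟩
  · simp only [convolution_apply_add]
    exact tendsto_convolution_of_tendsto L hf
      (fun n => (hφ.1.comp (continuous_add_const _)).stronglyMeasurable)
      (fun n y => hφC _) hφψ t
  · simp only [sub_eq_add_neg, convolution_apply_add]
    exact tendsto_convolution_of_tendsto L (g := fun n y => ψ (y + -σ (k n))) hf
      (fun n => hψ_meas.comp_measurable (measurable_add_const _))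
      (fun n y => hψC _) (fun y => by simpa only [sub_eq_add_neg] using hψφ y) t

end Convolution

theorem convolution_preserves_bounded_continuous_and_almost_automorphic
    (h : ℝ → ℂ) (hh : Integrable h)
    (φ : ℝ → ℂ) (hφc : Continuous φ) (hφb : ∃ C, ∀ t, ‖φ t‖ ≤ C) :
    Continuous (fun t => ∫ s : ℝ, h (t - s) * φ s) ∧
    (∀ t : ℝ, ‖∫ s : ℝ, h (t - s) * φ s‖ ≤ (⨆ t : ℝ, ‖φ t‖) * ∫ s : ℝ, ‖h s‖) ∧
    (AlmostAutomorphic φ → AlmostAutomorphic (fun t => ∫ s : ℝ, h (t - s) * φ s)) := by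
  obtain ⟨C, hC⟩ := hφb
  have hbdd : BddAbove (Set.range fun t => ‖φ t‖) := ⟨C, Set.forall_mem_range.2 hC⟩
  simp only [integral_mul_comp_sub_eq_convolution h φ]
  refine ⟨hbdd.continuous_convolution_right_of_integrable _ hh hφc, fun t => ?_,
    fun hφ => hφ.convolution _ hC hh⟩
  calc ‖(h ⋆[lsmul ℂ ℂ] φ) t‖ ≤ ‖lsmul ℂ ℂ‖ * (⨆ t, ‖φ t‖) * ∫ s, ‖h s‖ :=
        norm_convolution_le_of_norm_le _ hh (le_ciSup hbdd) t
    _ ≤ (⨆ t, ‖φ t‖) * ∫ s, ‖h s‖ := by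
        rw [mul_assoc]
        exact mul_le_of_le_one_left
          (mul_nonneg (Real.iSup_nonneg fun _ => norm_nonneg _)
            (integral_nonneg fun _ => norm_nonneg _)) opNorm_lsmul_le
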